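/- Let J be the right ideal of O(U_q(2)) generated by ξ, ζ − s, ζ* − s (with ξ, ζ as in the generic Podleś sphere embedding) and π: O(U_q(2)) → D = O(U_q(2))/J the quotient map. Then in D the relations π(γa) = −q·π(γ*u*a) and π(γ*a) = −q⁻¹·π(γua) hold for all a ∈ O(U_q(2)). -/
import Mathlib

set_option maxHeartbeats 2000000


/-- The right ideal `J` of `O(U_q(2))` generated by `ξ`, `ζ − s` and `ζ* − s`. -/
def Jideal (U : Type) [Ring U] [Algebra ℂ U] [StarRing U] (s : ℝ) (ξ ζ : U) :
    Submodule ℂ U :=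
  Submodule.span ℂ
    {w : U | ∃ a : U, w = ξ * a ∨ w = (ζ - (s : ℂ) • 1) * a ∨
      w = (star ζ - (s : ℂ) • 1) * a}

/-- in `D = O(U_q(2))/J` one has `π(γa) = −q·π(γ*u*a)` and
`π(γ*a) = −q⁻¹·π(γua)` for all `a`, i.e. `γa + q·γ*u*a ∈ J` and `γ*a + q⁻¹·γua ∈ J`. -/
theorem stmt17 (U : Type) [Ring U] [Algebra ℂ U] [StarRing U] [StarModule ℂ U]
    (q s : ℝ) (hq : 0 < q ∧ q < 1) (hs : 0 ≤ s ∧ s ≤ 1)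
    (u α γ : U)
    (hu_central : ∀ x : U, u * x = x * u)
    (hu_unitary : u * star u = 1 ∧ star u * u = 1)
    (h1 : α * γ = (q : ℂ) • (γ * α))
    (h2 : α * star γ = (q : ℂ) • (star γ * α))
    (h3 : γ * star γ = star γ * γ)
    (h4 : star α * α + γ * star γ = 1)
    (h5 : α * star α + ((q : ℂ)^2) • (γ * star γ) = 1)
    (ξ ζ : U)
    (hξ : ξ = ((1 - (s : ℂ)^2)) • (γ * star γ) +
      (s : ℂ) • (γ * α * u + star α * star γ * star u))
    (hζ : ζ = ((1 - (s : ℂ)^2)) • (α * star γ) +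
      (s : ℂ) • (α^2 * u - (q : ℂ) • ((star γ)^2 * star u))) :
    (∀ a : U, γ * a + (q : ℂ) • (star γ * star u * a) ∈ Jideal U s ξ ζ) ∧
    (∀ a : U, star γ * a + ((q : ℂ)⁻¹) • (γ * u * a) ∈ Jideal U s ξ ζ) := by
  obtain ⟨hq1, hq2⟩ := hq
  have hq0 : (q : ℂ) ≠ 0 := by
    exact_mod_cast ne_of_gt hq1
  obtain ⟨huU, hUu⟩ := hu_unitary
  have hU_central : ∀ x : U, star u * x = x * star u := by
    intro x
    have h := congrArg star (hu_central (star x))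
    simpa [star_mul] using h.symm
  -- starred commutation relations
  have h1s : star γ * star α = (q : ℂ) • (star α * star γ) := by
    have h := congrArg star h1
    simpa [star_mul, star_smul, Complex.star_def, Complex.conj_ofReal] using h
  have h2s : γ * star α = (q : ℂ) • (star α * γ) := by
    have h := congrArg star h2
    simpa [star_mul, star_smul, Complex.star_def, Complex.conj_ofReal] using h
  -- normal-ordering rewrite rules
  have r_gG : ∀ x : U, star γ * (γ * x) = γ * (star γ * x) := by
    intro x; rw [← mul_assoc, ← h3, mul_assoc]
  have r_ag : ∀ x : U, α * (γ * x) = (q : ℂ) • (γ * (α * x)) := by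
    intro x; rw [← mul_assoc, h1, smul_mul_assoc, mul_assoc]
  have r_aG : ∀ x : U, α * (star γ * x) = (q : ℂ) • (star γ * (α * x)) := by
    intro x; rw [← mul_assoc, h2, smul_mul_assoc, mul_assoc]
  have hAg : star α * γ = (q : ℂ)⁻¹ • (γ * star α) := by
    rw [h2s, smul_smul, inv_mul_cancel₀ hq0, one_smul]
  have hAG : star α * star γ = (q : ℂ)⁻¹ • (star γ * star α) := by
    rw [h1s, smul_smul, inv_mul_cancel₀ hq0, one_smul]
  have r_Ag : ∀ x : U, star α * (γ * x) = (q : ℂ)⁻¹ • (γ * (star α * x)) := by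
    intro x; rw [← mul_assoc, hAg, smul_mul_assoc, mul_assoc]
  have r_AG : ∀ x : U, star α * (star γ * x) = (q : ℂ)⁻¹ • (star γ * (star α * x)) := by
    intro x; rw [← mul_assoc, hAG, smul_mul_assoc, mul_assoc]
  have h5' : α * star α = 1 - (q : ℂ)^2 • (γ * star γ) := eq_sub_of_add_eq h5
  have h4' : star α * α = 1 - γ * star γ := eq_sub_of_add_eq h4
  have r_aA : ∀ x : U, α * (star α * x) = x - (q : ℂ)^2 • (γ * (star γ * x)) := by
    intro x; rw [← mul_assoc, h5', sub_mul, one_mul, smul_mul_assoc, mul_assoc]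
  have r_Aa : ∀ x : U, star α * (α * x) = x - γ * (star γ * x) := by
    intro x; rw [← mul_assoc, h4', sub_mul, one_mul, mul_assoc]
  have r_ug : ∀ x : U, u * (γ * x) = γ * (u * x) := by
    intro x; rw [← mul_assoc, hu_central γ, mul_assoc]
  have r_uG : ∀ x : U, u * (star γ * x) = star γ * (u * x) := by
    intro x; rw [← mul_assoc, hu_central (star γ), mul_assoc]
  have r_ua : ∀ x : U, u * (α * x) = α * (u * x) := by
    intro x; rw [← mul_assoc, hu_central α, mul_assoc]
  have r_uA : ∀ x : U, u * (star α * x) = star α * (u * x) := by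
    intro x; rw [← mul_assoc, hu_central (star α), mul_assoc]
  have r_Ug : ∀ x : U, star u * (γ * x) = γ * (star u * x) := by
    intro x; rw [← mul_assoc, hU_central γ, mul_assoc]
  have r_UG : ∀ x : U, star u * (star γ * x) = star γ * (star u * x) := by
    intro x; rw [← mul_assoc, hU_central (star γ), mul_assoc]
  have r_Ua : ∀ x : U, star u * (α * x) = α * (star u * x) := by
    intro x; rw [← mul_assoc, hU_central α, mul_assoc]
  have r_UA : ∀ x : U, star u * (star α * x) = star α * (star u * x) := by
    intro x; rw [← mul_assoc, hU_central (star α), mul_assoc]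
  have r_uU : ∀ x : U, u * (star u * x) = x := by
    intro x; rw [← mul_assoc, huU, one_mul]
  have r_Uu : ∀ x : U, star u * (u * x) = x := by
    intro x; rw [← mul_assoc, hUu, one_mul]
  constructor
  · intro a
    have key : γ * a + (q : ℂ) • (star γ * star u * a)
        = ξ * ((γ + ((q : ℂ)^3) • (star γ * star u) + (s : ℂ) • (star α * star u)) * a)
        + (ζ - (s : ℂ) • 1) * ((star α * star u) * a)
        + (star ζ - (s : ℂ) • 1) * ((α - ((s : ℂ) * (q : ℂ)) • (star γ * star u)) * a) := by
      rw [hξ, hζ]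
      simp only [star_add, star_sub, star_smul, star_mul, star_one, star_pow, star_star,
        Complex.star_def, Complex.conj_ofReal, pow_two,
        add_mul, mul_add, sub_mul, mul_sub, smul_add, smul_sub,
        smul_mul_assoc, mul_smul_comm, smul_smul, mul_assoc, one_mul, mul_one,
        r_gG, r_ag, r_aG, r_Ag, r_AG, r_aA, r_Aa,
        r_ug, r_uG, r_ua, r_uA, r_Ug, r_UG, r_Ua, r_UA, r_uU, r_Uu]
      match_scalars <;> field_simp <;> ring
    rw [key, Jideal]
    refine Submodule.add_mem _ (Submodule.add_mem _
      (Submodule.subset_span ⟨_, Or.inl rfl⟩)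
      (Submodule.subset_span ⟨_, Or.inr (Or.inl rfl)⟩))
      (Submodule.subset_span ⟨_, Or.inr (Or.inr rfl)⟩)
  · intro a
    have key : star γ * a + ((q : ℂ)⁻¹) • (γ * u * a)
        = ξ * ((((q : ℂ)^2) • star γ + ((q : ℂ)⁻¹) • (γ * u) + ((s : ℂ) * (q : ℂ)) • (α * u)) * a)
        + (ζ - (s : ℂ) • 1) * ((((q : ℂ)⁻¹) • star α - ((s : ℂ) * (q : ℂ)⁻¹) • (γ * u)) * a)
        + (star ζ - (s : ℂ) • 1) * ((((q : ℂ)⁻¹) • (α * u)) * a) := by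
      rw [hξ, hζ]
      simp only [star_add, star_sub, star_smul, star_mul, star_one, star_pow, star_star,
        Complex.star_def, Complex.conj_ofReal, pow_two,
        add_mul, mul_add, sub_mul, mul_sub, smul_add, smul_sub,
        smul_mul_assoc, mul_smul_comm, smul_smul, mul_assoc, one_mul, mul_one,
        r_gG, r_ag, r_aG, r_Ag, r_AG, r_aA, r_Aa,
        r_ug, r_uG, r_ua, r_uA, r_Ug, r_UG, r_Ua, r_UA, r_uU, r_Uu]
      match_scalars <;> field_simp <;> ring
    rw [key, Jideal]
    refine Submodule.add_mem _ (Submodule.add_mem _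
      (Submodule.subset_span ⟨_, Or.inl rfl⟩)
      (Submodule.subset_span ⟨_, Or.inr (Or.inl rfl)⟩))
      (Submodule.subset_span ⟨_, Or.inr (Or.inr rfl)⟩)
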